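/- Let m ≥ 1, let A, B ∈ ℙ_m with det A = det B = 1, and let t ∈ ℝ be nonzero. Then the following are equivalent: (1) A^{-1} ∼ B; (2) A^{-1} # B = det(I + A B)^{-1/m} (A^{-1} + B); (3) A ♮_t B = det(I + A B)^{-2t/m} (A^{-1} + B)^t A (A^{-1} + B)^t. (Here det(I + A B) is a positive real number, since the eigenvalues of A B are positive, and real powers of it are taken in ℝ.) -/

import Mathlib

/-!
Put `C = A^{1/2} B A^{1/2}`. It is similar to `AB`, has determinant 1, and
`det (I + AB) = det (I + C)`; moreover `A⁻¹ # B = A^{-1/2} C^{1/2} A^{-1/2}` and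
`A⁻¹ + B = A^{-1/2} (I + C) A^{-1/2}`. Hence (2) says `C^{1/2} = r (I + C)`, i.e.
`√μ / (1 + μ) = r` for every eigenvalue `μ` of `C`. Since `√x / (1 + x) = √y / (1 + y)` iff
`y = x` or `y = 1 / x`, this holds for some `r` iff the spectrum of `C` is `{a, 1 / a}`, which is
(1); multiplying over all eigenvalues forces `r = det (I + C)^{-1/m}`.

(2) ⇔ (3): `X ↦ X^t` is injective on positive definite matrices, and `X A X = Y A Y` has at most
one positive definite solution `X`, since `A^{1/2} X A^{1/2}` is the positive square root of
`A^{1/2} (X A X) A^{1/2}`.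
-/

open Matrix
open scoped ComplexOrder

/-- Real power `A^t = exp(t · log A)` of a Hermitian positive definite matrix, defined via
the functional calculus (spectral decomposition). -/
noncomputable def mpow {n : ℕ} (A : Matrix (Fin n) (Fin n) ℂ) (t : ℝ) :
    Matrix (Fin n) (Fin n) ℂ :=
  if hA : A.IsHermitian then
    (hA.eigenvectorUnitary : Matrix (Fin n) (Fin n) ℂ) *
      Matrix.diagonal (fun i => ((hA.eigenvalues i ^ t : ℝ) : ℂ)) *
      (star (hA.eigenvectorUnitary : Matrix (Fin n) (Fin n) ℂ))
  else A

/-- Logarithm of a Hermitian positive definite matrix via the functional calculus. -/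
noncomputable def mlog {n : ℕ} (A : Matrix (Fin n) (Fin n) ℂ) : Matrix (Fin n) (Fin n) ℂ :=
  if hA : A.IsHermitian then
    (hA.eigenvectorUnitary : Matrix (Fin n) (Fin n) ℂ) *
      Matrix.diagonal (fun i => ((Real.log (hA.eigenvalues i) : ℝ) : ℂ)) *
      (star (hA.eigenvectorUnitary : Matrix (Fin n) (Fin n) ℂ))
  else A

/-- Metric geometric mean `A # B = A^{1/2} (A^{-1/2} B A^{-1/2})^{1/2} A^{1/2}`. -/
noncomputable def geomMean {n : ℕ} (A B : Matrix (Fin n) (Fin n) ℂ) :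
    Matrix (Fin n) (Fin n) ℂ :=
  mpow A (1/2) * mpow (mpow A (-(1/2)) * B * mpow A (-(1/2))) (1/2) * mpow A (1/2)

/-- Weighted spectral geometric mean `A ♮_t B = (A⁻¹ # B)^t A (A⁻¹ # B)^t`. -/
noncomputable def spectralMean {n : ℕ} (t : ℝ) (A B : Matrix (Fin n) (Fin n) ℂ) :
    Matrix (Fin n) (Fin n) ℂ :=
  mpow (geomMean A⁻¹ B) t * A * mpow (geomMean A⁻¹ B) t

/-- The tolerance relation `A ∼ B`: there are `a, b > 0` with
`√(ab) = det(A⁻¹B)^{1/m}` and `σ(A⁻¹B) = {a, b}`. -/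
def tolRel {m : ℕ} (A B : Matrix (Fin m) (Fin m) ℂ) : Prop :=
  ∃ a b : ℝ, 0 < a ∧ 0 < b ∧
    (Real.sqrt (a * b) : ℂ) = (A⁻¹ * B).det ^ ((1 : ℂ) / (m : ℂ)) ∧
    spectrum ℂ (A⁻¹ * B) = {(a : ℂ), (b : ℂ)}

namespace Real

lemma sqrt_div_one_add_eq_iff {x y : ℝ} (hx : 0 < x) (hy : 0 < y) :
    √x / (1 + x) = √y / (1 + y) ↔ x = y ∨ x * y = 1 := by
  obtain ⟨s, hs, rfl⟩ : ∃ s, 0 < s ∧ x = s ^ 2 := ⟨√x, sqrt_pos.2 hx, (sq_sqrt hx.le).symm⟩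
  obtain ⟨u, hu, rfl⟩ : ∃ u, 0 < u ∧ y = u ^ 2 := ⟨√y, sqrt_pos.2 hy, (sq_sqrt hy.le).symm⟩
  rw [sqrt_sq hs.le, sqrt_sq hu.le, div_eq_div_iff (by positivity) (by positivity),
    ← mul_pow, sq_eq_sq₀ hs.le hu.le, pow_eq_one_iff_of_nonneg (by positivity) two_ne_zero,
    ← sub_eq_zero, ← sub_eq_zero (a := s), ← sub_eq_zero (a := s * u), ← mul_eq_zero]
  -- `s (1 + u²) - u (1 + s²) = (s - u) (1 - s u)`
  constructor <;> intro h <;> linear_combination -h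

variable {ι : Type*} [Fintype ι] [Nonempty ι] {μ : ι → ℝ}

lemma exists_range_eq_pair_iff_exists_sqrt_eq_mul (hμ : ∀ i, 0 < μ i) (hprod : ∏ i, μ i = 1) :
    (∃ a b : ℝ, 0 < a ∧ 0 < b ∧ a * b = 1 ∧ Set.range μ = {a, b}) ↔
      ∃ r, ∀ i, √(μ i) = r * (1 + μ i) := by
  have hdiv (r : ℝ) (i : ι) : √(μ i) = r * (1 + μ i) ↔ √(μ i) / (1 + μ i) = r := by
    rw [div_eq_iff (by linarith [hμ i]), eq_comm]
  simp_rw [hdiv]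
  constructor
  · rintro ⟨a, b, ha, -, hab, hrange⟩
    refine ⟨√a / (1 + a), fun i => ?_⟩
    rcases hrange ▸ Set.mem_range_self i with hi | hi
    · rw [hi]
    · exact (sqrt_div_one_add_eq_iff (hμ i) ha).2 (.inr (by rw [hi, mul_comm, hab]))
  · rintro ⟨r, hr⟩
    let i₀ : ι := Classical.arbitrary ι
    have hcases (i : ι) : μ i = μ i₀ ∨ μ i * μ i₀ = 1 :=
      (sqrt_div_one_add_eq_iff (hμ i) (hμ i₀)).1 ((hr i).trans (hr i₀).symm)
    obtain ⟨j, hj⟩ : ∃ j, μ j * μ i₀ = 1 := by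
      by_contra! h
      have hconst : μ i₀ ^ Fintype.card ι = 1 := by
        rw [← hprod, ← Finset.card_univ, ← Finset.prod_const]
        exact Finset.prod_congr rfl fun i _ => ((hcases i).resolve_right (h i)).symm
      rw [pow_eq_one_iff_of_nonneg (hμ i₀).le Fintype.card_ne_zero] at hconst
      exact h i₀ (by rw [hconst, one_mul])
    refine ⟨μ i₀, μ j, hμ i₀, hμ j, by rw [mul_comm, hj], ?_⟩
    refine Set.Subset.antisymm ?_ (Set.insert_subset (Set.mem_range_self _)
      (Set.singleton_subset_iff.2 (Set.mem_range_self _)))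
    rintro _ ⟨i, rfl⟩
    exact (hcases i).imp id fun hi => mul_right_cancel₀ (hμ i₀).ne' (hi.trans hj.symm)

lemma eq_prod_one_add_rpow_of_sqrt_eq_mul (hμ : ∀ i, 0 < μ i) (hprod : ∏ i, μ i = 1) {r : ℝ}
    (hr : ∀ i, √(μ i) = r * (1 + μ i)) :
    r = (∏ i, (1 + μ i)) ^ (-1 / Fintype.card ι : ℝ) := by
  let i₀ : ι := Classical.arbitrary ι
  have hd : 0 < ∏ i, (1 + μ i) := Finset.prod_pos fun i _ => by linarith [hμ i]
  have hrpos : 0 < r :=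
    pos_of_mul_pos_left (hr i₀ ▸ sqrt_pos.2 (hμ i₀)) (by linarith [hμ i₀])
  have hpow : r ^ Fintype.card ι * ∏ i, (1 + μ i) = 1 := calc
    _ = ∏ i, √(μ i) := by
      simp only [hr, Finset.prod_mul_distrib, Finset.prod_const, Finset.card_univ]
    _ = 1 := by rw [← sqrt_prod _ fun i _ => (hμ i).le, hprod, sqrt_one]
  rw [← pow_rpow_inv_natCast hrpos.le (Fintype.card_ne_zero (α := ι)),
    eq_inv_of_mul_eq_one_left hpow, inv_rpow hd.le, ← rpow_neg hd.le, neg_div, one_div]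

lemma exists_range_eq_pair_iff_sqrt_eq_rpow_mul (hμ : ∀ i, 0 < μ i) (hprod : ∏ i, μ i = 1) :
    (∃ a b : ℝ, 0 < a ∧ 0 < b ∧ a * b = 1 ∧ Set.range μ = {a, b}) ↔
      ∀ i, √(μ i) = (∏ j, (1 + μ j)) ^ (-1 / Fintype.card ι : ℝ) * (1 + μ i) := by
  rw [exists_range_eq_pair_iff_exists_sqrt_eq_mul hμ hprod]
  exact ⟨fun ⟨r, hr⟩ => eq_prod_one_add_rpow_of_sqrt_eq_mul hμ hprod hr ▸ hr, fun h => ⟨_, h⟩⟩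

end Real

namespace CFC

variable {A : Type*} [PartialOrder A] [Ring A] [StarRing A] [TopologicalSpace A]
  [StarOrderedRing A] [Algebra ℝ A] [ContinuousFunctionalCalculus ℝ A IsSelfAdjoint]
  [NonnegSpectrumClass ℝ A]

lemma rpow_half_mul_rpow_half {a : A} (ha : IsStrictlyPositive a) :
    a ^ (1 / 2 : ℝ) * a ^ (1 / 2 : ℝ) = a := by
  rw [← rpow_add ha.isUnit]
  norm_num [rpow_one a ha.nonneg]

variable [IsSemitopologicalRing A] [T2Space A]

lemma rpow_left_inj {a b : A} (ha : IsStrictlyPositive a) (hb : IsStrictlyPositive b) {t : ℝ}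
    (ht : t ≠ 0) : a ^ t = b ^ t ↔ a = b := by
  refine ⟨fun h => ?_, congrArg (· ^ t)⟩
  rw [← rpow_rpow_inv a t ht, h, rpow_rpow_inv b t ht]

lemma mul_mul_eq_mul_mul_iff {a x y : A} (ha : IsStrictlyPositive a) (hx : 0 ≤ x) (hy : 0 ≤ y) :
    x * a * x = y * a * y ↔ x = y := by
  refine ⟨fun h => ?_, fun h => h ▸ rfl⟩
  have hr : IsStrictlyPositive (a ^ (1 / 2 : ℝ)) := ha.rpow a _
  set r := a ^ (1 / 2 : ℝ)
  have hrr : r * r = a := rpow_half_mul_rpow_half ha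
  have hsq (z : A) : (r * z * r) * (r * z * r) = r * (z * a * z) * r := by
    simp only [← hrr, mul_assoc]
  have hconj : r * x * r = r * y * r := by
    rw [← mul_self_eq_mul_self_iff _ _ (conjugate_nonneg_of_nonneg hx hr.nonneg)
      (conjugate_nonneg_of_nonneg hy hr.nonneg), hsq, hsq, h]
  simpa [hr.isUnit.mul_right_inj, hr.isUnit.mul_left_inj] using hconj

lemma smul_rpow [StarModule ℝ A] {a : A} (ha : IsStrictlyPositive a) {c : ℝ} (hc : 0 < c)
    (t : ℝ) : (c • a) ^ t = c ^ t • a ^ t := by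
  have hspec : ∀ x ∈ spectrum ℝ a, 0 < x := fun x hx => ha.spectrum_pos hx
  have hcont : ContinuousOn (fun x : ℝ => x ^ t) (spectrum ℝ a) :=
    continuousOn_id.rpow_const fun x hx => .inl (hspec x hx).ne'
  rw [rpow_eq_cfc_real (smul_nonneg hc.le ha.nonneg), rpow_eq_cfc_real ha.nonneg,
    ← cfc_comp_const_mul c _ a ?_ ha.isSelfAdjoint, ← cfc_const_mul _ _ a hcont]
  · exact cfc_congr fun x hx => Real.mul_rpow hc.le (hspec x hx).le
  · refine continuousOn_id.rpow_const ?_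
    rintro _ ⟨x, hx, rfl⟩
    exact .inl (mul_pos hc (hspec x hx)).ne'

end CFC

lemma tolRel_iff_of_det_eq_one {n : ℕ} {X Y : Matrix (Fin n) (Fin n) ℂ}
    (h : (X⁻¹ * Y).det = 1) :
    tolRel X Y ↔
      ∃ a b : ℝ, 0 < a ∧ 0 < b ∧ a * b = 1 ∧ spectrum ℂ (X⁻¹ * Y) = {(a : ℂ), (b : ℂ)} := by
  unfold tolRel
  rw [h, Complex.one_cpow]
  refine exists₂_congr fun a b => and_congr_right fun _ => and_congr_right fun _ => ?_
  rw [Complex.ofReal_eq_one, Real.sqrt_eq_one]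

namespace Matrix

open scoped MatrixOrder

section RCLike

variable {ι 𝕜 : Type*} [Fintype ι] [DecidableEq ι] [RCLike 𝕜] {A B : Matrix ι ι 𝕜}

lemma IsHermitian.det_one_add {C : Matrix ι ι 𝕜} (hC : C.IsHermitian) :
    (1 + C).det = ((∏ i, (1 + hC.eigenvalues i) : ℝ) : 𝕜) := by
  conv_lhs => rw [hC.spectral_theorem,
    ← map_one (Unitary.conjStarAlgAut 𝕜 _ hC.eigenvectorUnitary), ← map_add]
  simp only [Unitary.conjStarAlgAut_apply, det_mul, ← diagonal_one, diagonal_add, det_diagonal]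
  rw [mul_right_comm, ← det_mul, Unitary.mul_star_self_of_mem hC.eigenvectorUnitary.2, det_one,
    one_mul]
  push_cast
  rfl

lemma PosSemidef.rpow_half_eq_smul_one_add_iff {C : Matrix ι ι 𝕜} (hC : C.PosSemidef) (r : ℝ) :
    C ^ (1 / 2 : ℝ) = r • (1 + C) ↔
      ∀ i, √(hC.isHermitian.eigenvalues i) = r * (1 + hC.isHermitian.eigenvalues i) := by
  have hcfc : r • (1 + C) = cfc (fun x : ℝ => r * (1 + x)) C := by
    rw [cfc_const_mul .., cfc_const_add .., cfc_id' ..]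
    simp
  rw [CFC.rpow_eq_cfc_real hC.nonneg, hcfc, cfc_eq_cfc_iff_eqOn,
    hC.isHermitian.spectrum_real_eq_range_eigenvalues, Set.eqOn_range]
  simp only [funext_iff, Function.comp_apply, Real.sqrt_eq_rpow]

lemma PosDef.inv_rpow (hA : A.PosDef) (t : ℝ) : A⁻¹ ^ t = A ^ (-t) := by
  simpa [coe_units_inv] using (CFC.rpow_neg hA.isUnit.unit t hA.posSemidef.nonneg).symm

lemma PosDef.rpow_mul_mul_rpow (hA : A.PosDef) (hB : B.PosDef) (t : ℝ) :
    (A ^ t * B * A ^ t).PosDef :=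
  have hR := hA.isStrictlyPositive.rpow A t
  (IsStrictlyPositive.conjugate_of_isUnit_of_isSelfAdjoint B _ hR.isUnit hR.isSelfAdjoint
    hB.isStrictlyPositive).posDef

lemma PosDef.inv_add_eq_rpow_mul_mul_rpow (hA : A.PosDef) :
    A⁻¹ + B = A ^ (-(1 / 2) : ℝ) * (1 + A ^ (1 / 2 : ℝ) * B * A ^ (1 / 2 : ℝ)) *
      A ^ (-(1 / 2) : ℝ) := by
  have hA' := hA.isStrictlyPositive
  have hinv : A ^ (-(1 / 2) : ℝ) * A ^ (-(1 / 2) : ℝ) = A⁻¹ := by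
    rw [← CFC.rpow_add hA.isUnit, show (-(1 / 2) + -(1 / 2) : ℝ) = -1 by norm_num,
      ← hA.inv_rpow, CFC.rpow_one _ hA.inv.posSemidef.nonneg]
  simp only [mul_add, add_mul, mul_one, hinv, ← mul_assoc, CFC.rpow_neg_mul_rpow _ hA']
  simp only [mul_assoc, CFC.rpow_mul_rpow_neg _ hA', mul_one, one_mul]

lemma PosDef.det_one_add_mul (hA : A.PosDef) :
    (1 + A * B).det = (1 + A ^ (1 / 2 : ℝ) * B * A ^ (1 / 2 : ℝ)).det := by
  conv_lhs => rw [← CFC.rpow_half_mul_rpow_half hA.isStrictlyPositive, mul_assoc]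
  exact det_one_add_mul_comm _ _

lemma PosDef.spectrum_mul (hA : A.PosDef) :
    spectrum 𝕜 (A * B) = spectrum 𝕜 (A ^ (1 / 2 : ℝ) * B * A ^ (1 / 2 : ℝ)) := by
  obtain ⟨u, hu⟩ := (hA.isStrictlyPositive.rpow A (1 / 2 : ℝ)).isUnit
  have huu : (u : Matrix ι ι 𝕜) * u = A :=
    hu ▸ CFC.rpow_half_mul_rpow_half hA.isStrictlyPositive
  rw [← hu, ← huu, ← spectrum.units_conjugate (u := u) (a := u * B * u)]
  simp [mul_assoc]

end RCLike

variable {n : ℕ} {A B : Matrix (Fin n) (Fin n) ℂ}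

lemma PosSemidef.mpow_eq_rpow (hA : A.PosSemidef) (t : ℝ) : mpow A t = A ^ t := by
  rw [mpow, dif_pos hA.isHermitian, CFC.rpow_eq_cfc_real hA.nonneg, hA.isHermitian.cfc_eq,
    IsHermitian.cfc]
  rfl

lemma PosDef.geomMean_inv_eq (hA : A.PosDef) (hB : B.PosDef) :
    geomMean A⁻¹ B = A ^ (-(1 / 2) : ℝ) * (A ^ (1 / 2 : ℝ) * B * A ^ (1 / 2 : ℝ)) ^ (1 / 2 : ℝ) *
      A ^ (-(1 / 2) : ℝ) := by
  simp only [geomMean, hA.inv.posSemidef.mpow_eq_rpow, hA.inv_rpow, neg_neg,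
    (hA.rpow_mul_mul_rpow hB _).posSemidef.mpow_eq_rpow]

lemma PosDef.geomMean_inv_eq_smul_iff (hA : A.PosDef) (hB : B.PosDef) (r : ℝ) :
    geomMean A⁻¹ B = r • (A⁻¹ + B) ↔
      (A ^ (1 / 2 : ℝ) * B * A ^ (1 / 2 : ℝ)) ^ (1 / 2 : ℝ) =
        r • (1 + A ^ (1 / 2 : ℝ) * B * A ^ (1 / 2 : ℝ)) := by
  have hu := (hA.isStrictlyPositive.rpow A (-(1 / 2) : ℝ)).isUnit
  rw [hA.geomMean_inv_eq hB, hA.inv_add_eq_rpow_mul_mul_rpow, ← smul_mul_assoc, ← mul_smul_comm,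
    hu.mul_left_inj, hu.mul_right_inj]

lemma PosDef.tolRel_inv_iff_geomMean_eq (hn : 1 ≤ n) (hA : A.PosDef) (hB : B.PosDef)
    (hdet : A.det * B.det = 1) :
    tolRel A⁻¹ B ↔ geomMean A⁻¹ B = ((1 + A * B).det.re ^ (-(1 : ℝ) / n)) • (A⁻¹ + B) := by
  have hC := hA.rpow_mul_mul_rpow hB (1 / 2)
  have : Nonempty (Fin n) := ⟨⟨0, hn⟩⟩
  have hAinv : A⁻¹⁻¹ = A := nonsing_inv_nonsing_inv _ ((isUnit_iff_isUnit_det A).1 hA.isUnit)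
  have hprod : ∏ i, hC.isHermitian.eigenvalues i = 1 := by
    have hdetC : (A ^ (1 / 2 : ℝ) * B * A ^ (1 / 2 : ℝ)).det = 1 := by
      rw [det_mul, det_mul, mul_right_comm, ← det_mul,
        CFC.rpow_half_mul_rpow_half hA.isStrictlyPositive, hdet]
    rw [hC.isHermitian.det_eq_prod_eigenvalues, ← RCLike.ofReal_prod] at hdetC
    exact RCLike.ofReal_injective (hdetC.trans RCLike.ofReal_one.symm)
  have hdetre : (1 + A * B).det.re = ∏ i, (1 + hC.isHermitian.eigenvalues i) := by
    rw [hA.det_one_add_mul, hC.isHermitian.det_one_add]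
    exact Complex.ofReal_re _
  have hspec (a b : ℝ) : spectrum ℂ (A⁻¹⁻¹ * B) = {(a : ℂ), (b : ℂ)} ↔
      Set.range hC.isHermitian.eigenvalues = {a, b} := by
    rw [hAinv, hA.spectrum_mul, hC.isHermitian.spectrum_eq_image_range,
      ← (Set.image_injective.2 (RCLike.ofReal_injective (K := ℂ))).eq_iff (b := {a, b}),
      Set.image_pair]
    rfl
  have key := Real.exists_range_eq_pair_iff_sqrt_eq_rpow_mul hC.eigenvalues_pos hprod
  rw [Fintype.card_fin] at key
  simp only [tolRel_iff_of_det_eq_one (by rw [hAinv, det_mul, hdet]), hspec, key,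
    hA.geomMean_inv_eq_smul_iff hB, hC.posSemidef.rpow_half_eq_smul_one_add_iff, hdetre]

lemma PosDef.re_det_one_add_mul_pos (hA : A.PosDef) (hB : B.PosDef) :
    0 < (1 + A * B).det.re := by
  rw [hA.det_one_add_mul]
  exact (Complex.pos_iff.1 (PosDef.one.add (hA.rpow_mul_mul_rpow hB _)).det_pos).1

lemma PosDef.spectralMean_eq_smul_iff (hA : A.PosDef) (hB : B.PosDef) {t : ℝ} (ht : t ≠ 0)
    {c : ℝ} (hc : 0 < c) :
    spectralMean t A B = (c ^ (2 * t)) • (mpow (A⁻¹ + B) t * A * mpow (A⁻¹ + B) t) ↔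
      geomMean A⁻¹ B = c • (A⁻¹ + B) := by
  have hG : IsStrictlyPositive (geomMean A⁻¹ B) := by
    rw [hA.geomMean_inv_eq hB]
    exact (hA.rpow_mul_mul_rpow ((hA.rpow_mul_mul_rpow hB _).isStrictlyPositive.rpow _
      (1 / 2 : ℝ)).posDef _).isStrictlyPositive
  have hS : IsStrictlyPositive (A⁻¹ + B) := (hA.inv.add hB).isStrictlyPositive
  have hscal (X : Matrix (Fin n) (Fin n) ℂ) :
      (c ^ (2 * t)) • (X * A * X) = (c ^ t • X) * A * (c ^ t • X) := by
    rw [smul_mul_assoc, smul_mul_assoc, mul_smul_comm, smul_smul, two_mul, Real.rpow_add hc]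
  rw [spectralMean, hG.nonneg.posSemidef.mpow_eq_rpow, hS.nonneg.posSemidef.mpow_eq_rpow, hscal,
    ← CFC.smul_rpow hS hc, CFC.mul_mul_eq_mul_mul_iff hA.isStrictlyPositive CFC.rpow_nonneg
    CFC.rpow_nonneg, CFC.rpow_left_inj hG (hS.smul hc) ht]

end Matrix

theorem tolRel_iff_geomMean_iff_spectralMean {m : ℕ} (hm : 1 ≤ m)
    (A B : Matrix (Fin m) (Fin m) ℂ) (hA : A.PosDef) (hB : B.PosDef)
    (hdetA : A.det = 1) (hdetB : B.det = 1) (t : ℝ) (ht : t ≠ 0) :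
    (tolRel A⁻¹ B ↔
      geomMean A⁻¹ B = ((1 + A * B).det.re ^ (-(1 : ℝ) / m)) • (A⁻¹ + B)) ∧
    (tolRel A⁻¹ B ↔
      spectralMean t A B = ((1 + A * B).det.re ^ (-(2 * t) / m)) •
        (mpow (A⁻¹ + B) t * A * mpow (A⁻¹ + B) t)) := by
  have hgeom := hA.tolRel_inv_iff_geomMean_eq hm hB (by rw [hdetA, hdetB, one_mul])
  refine ⟨hgeom, hgeom.trans ?_⟩
  have hd := hA.re_det_one_add_mul_pos hB
  rw [show -(2 * t) / m = -(1 : ℝ) / m * (2 * t) by ring, Real.rpow_mul hd.le]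
  exact (hA.spectralMean_eq_smul_iff hB ht (Real.rpow_pos_of_pos hd _)).symm
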